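/- Let K be a field of characteristic coprime to n, and let α be a root of the irreducible polynomial f(z) = z^n + s·z + t over K with n ≥ 3. Then the traces of powers of α in the field extension K(α)/K satisfy Tr(α^i) = 0 for i = 1, ..., n−2 and Tr(α^{n-1}) = −(n−1)·s. -/

import Mathlib

/-!
In the power basis `1, α, …, α^(n-1)` the trace of `α^i` is the sum of the diagonal
coefficients `[α^j] α^(i+j)`. For `1 ≤ i ≤ n - 1` and `j < n` one reduction
`α^n = -s α - t` brings `α^(i+j)` back into the basis, and the reduced expression
`-s α^(i+j-n+1) - t α^(i+j-n)` meets the diagonal only when `i = n - 1` and `j ≠ 0`,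
each time with coefficient `-s`.
-/

open Polynomial

namespace Polynomial

variable {R : Type*} [CommRing R] {n : ℕ}

theorem monic_X_pow_add_C_mul_X_add_C (hn : 2 ≤ n) (s t : R) :
    (X ^ n + C s * X + C t : R[X]).Monic := by
  monicity!
  rw [if_pos (by omega), if_neg (by omega)]
  simp

theorem natDegree_X_pow_add_C_mul_X_add_C [Nontrivial R] (hn : 2 ≤ n) (s t : R) :
    (X ^ n + C s * X + C t : R[X]).natDegree = n := by
  compute_degree!
  · rw [if_neg (by omega), if_neg (by omega)]
    simp
  all_goals omega

end Polynomial

namespace PowerBasis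

variable {R S : Type*} [CommRing R] [CommRing S] [Algebra R S] (pb : PowerBasis R S)

theorem basis_repr_gen_pow {k : ℕ} (hk : k < pb.dim) (j : Fin pb.dim) :
    pb.basis.repr (pb.gen ^ k) j = if (j : ℕ) = k then 1 else 0 := by
  rw [← pb.basis_eq_pow ⟨k, hk⟩, pb.basis.repr_self, Finsupp.single_apply]
  simp [Fin.ext_iff, eq_comm]

theorem trace_gen_pow (i : ℕ) :
    Algebra.trace R S (pb.gen ^ i) = ∑ j : Fin pb.dim, pb.basis.repr (pb.gen ^ (i + j)) j := by
  classical
  rw [Algebra.trace_eq_matrix_trace pb.basis, Matrix.trace]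
  refine Finset.sum_congr rfl fun j _ => ?_
  rw [Matrix.diag_apply, Algebra.leftMulMatrix_eq_repr_mul, pb.basis_eq_pow, ← pow_add]

variable {pb} {s t : R}

theorem gen_pow_dim_add_of_aeval_trinomial
    (hf : aeval pb.gen (X ^ pb.dim + C s * X + C t) = 0) (k : ℕ) :
    pb.gen ^ (pb.dim + k) = -s • pb.gen ^ (k + 1) - t • pb.gen ^ k := by
  simp only [map_add, map_mul, aeval_X_pow, aeval_C, aeval_X] at hf
  rw [Algebra.smul_def, Algebra.smul_def, map_neg]
  linear_combination pb.gen ^ k * hf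

theorem basis_repr_gen_pow_add_of_aeval_trinomial
    (hf : aeval pb.gen (X ^ pb.dim + C s * X + C t) = 0) {i : ℕ} (hi₁ : 1 ≤ i)
    (hi : i < pb.dim) (j : Fin pb.dim) :
    pb.basis.repr (pb.gen ^ (i + j)) j = if i + 1 = pb.dim ∧ (j : ℕ) ≠ 0 then -s else 0 := by
  have hj := j.isLt
  by_cases hij : i + j < pb.dim
  · rw [pb.basis_repr_gen_pow hij, if_neg (by omega), if_neg (by omega)]
  · obtain ⟨k, hk⟩ : ∃ k, i + j = pb.dim + k := ⟨i + j - pb.dim, by omega⟩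
    rw [hk, gen_pow_dim_add_of_aeval_trinomial hf, map_sub, map_smul, map_smul,
      Finsupp.sub_apply, Finsupp.smul_apply, Finsupp.smul_apply,
      pb.basis_repr_gen_pow (by omega), pb.basis_repr_gen_pow (by omega)]
    split_ifs <;> first | omega | simp

theorem trace_gen_pow_of_aeval_trinomial
    (hf : aeval pb.gen (X ^ pb.dim + C s * X + C t) = 0) {i : ℕ} (hi₁ : 1 ≤ i)
    (hi : i < pb.dim) :
    Algebra.trace R S (pb.gen ^ i) = if i + 1 = pb.dim then -((pb.dim : R) - 1) * s else 0 := by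
  simp_rw [pb.trace_gen_pow, basis_repr_gen_pow_add_of_aeval_trinomial hf hi₁ hi,
    Fin.sum_univ_eq_sum_range (fun j => if i + 1 = pb.dim ∧ j ≠ 0 then -s else 0)]
  obtain ⟨m, hm⟩ : ∃ m, pb.dim = m + 1 := ⟨pb.dim - 1, by omega⟩
  rw [hm, Finset.sum_range_succ']
  by_cases h : i = m <;> simp [h]

end PowerBasis

theorem trace_powers_of_bring_jerrard_root_general
    (K L : Type*) [Field K] [Field L] [Algebra K L]
    (n : ℕ) (hn : 3 ≤ n) (s t : K)
    (hirr : Irreducible (X ^ n + C s * X + C t : K[X]))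
    (α : L) (hroot : Polynomial.aeval α (X ^ n + C s * X + C t : K[X]) = 0)
    (hgen : Algebra.adjoin K {α} = ⊤) :
    (∀ i : ℕ, 1 ≤ i → i ≤ n - 2 → Algebra.trace K L (α ^ i) = 0) ∧
      Algebra.trace K L (α ^ (n - 1)) = -((n : K) - 1) * s := by
  have hmonic := monic_X_pow_add_C_mul_X_add_C (by omega : 2 ≤ n) s t
  have hmin := minpoly.eq_of_irreducible_of_monic hirr hroot hmonic
  let pb := PowerBasis.ofAdjoinEqTop ⟨_, hmonic, hroot⟩ hgen
  have hdim : pb.dim = n := by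
    rw [show pb.dim = (minpoly K α).natDegree from rfl, ← hmin,
      natDegree_X_pow_add_C_mul_X_add_C (by omega)]
  have htrace {i : ℕ} (hi₁ : 1 ≤ i) (hi : i < n) :
      Algebra.trace K L (α ^ i) = if i + 1 = n then -((n : K) - 1) * s else 0 := by
    rw [← hdim] at hi ⊢
    exact pb.trace_gen_pow_of_aeval_trinomial (by rwa [hdim]) hi₁ hi
  refine ⟨fun i hi₁ hi => ?_, ?_⟩
  · rw [htrace hi₁ (by omega), if_neg (by omega)]
  · rw [htrace (by omega) (by omega), if_pos (by omega)]

/-- Let `K` be a field with characteristic coprime to `n`, and `α` a root of the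
irreducible polynomial `f(z) = z^n + s·z + t` (n ≥ 3) generating the field extension
`L = K(α)`. Then `Tr_{L/K}(α^i) = 0` for `i = 1, ..., n−2` and
`Tr_{L/K}(α^{n-1}) = −(n−1)·s`. -/
theorem trace_powers_of_bring_jerrard_root
    (K L : Type*) [Field K] [Field L] [Algebra K L]
    (n : ℕ) (hn : 3 ≤ n) (hchar : (n : K) ≠ 0) (s t : K)
    (hirr : Irreducible (X ^ n + C s * X + C t : K[X]))
    (α : L) (hroot : Polynomial.aeval α (X ^ n + C s * X + C t : K[X]) = 0)
    (hgen : Algebra.adjoin K {α} = ⊤) :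
    (∀ i : ℕ, 1 ≤ i → i ≤ n - 2 → Algebra.trace K L (α ^ i) = 0) ∧
      Algebra.trace K L (α ^ (n - 1)) = -((n : K) - 1) * s :=
  trace_powers_of_bring_jerrard_root_general K L n hn s t hirr α hroot hgen
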